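/- Let G < K and H be countable groups, K ↷ (X,μ) a pmp action, c : K × X → H a cocycle, and Y ⊆ X a G-invariant measurable set. If the restriction c|(G × Y) is amenable, then c|(G × Z) is amenable, where Z = ⋃_{k ∈ N_K(G)} kY. -/

import Mathlib

open MeasureTheory Filter Topology

/-- `ℓ¹` probability vectors on `H` (the space `P(H)`). -/
def IsProbVec {H : Type*} (p : H → ℝ) : Prop :=
  (∀ h, 0 ≤ p h) ∧ ∑' h, p h = 1

/-- The `ℓ¹` distance between two vectors. -/
noncomputable def l1dist {H : Type*} (p q : H → ℝ) : ℝ := ∑' h, |p h - q h|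

/-- The left translation action of `H` on `ℓ¹(H)`. -/
def lshift {H : Type*} [Group H] (h : H) (p : H → ℝ) : H → ℝ := fun k => p (h⁻¹ * k)

/-- A cocycle `c` for an action `σ` of `Γ` on `(X, μ)`, with values in a countable group `H`,
is *amenable* if there are Borel maps `φₙ : X → P(H)` with
`‖φₙ(gx) − c(g,x)·φₙ(x)‖₁ → 0` for every `g ∈ Γ` and a.e. `x ∈ X`. -/
def AmenableCocycle {Γ H X : Type*} [Group H] [MeasurableSpace X]
    (μ : Measure X) (σ : Γ → X → X) (c : Γ → X → H) : Prop :=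
  ∃ φ : ℕ → X → H → ℝ,
    (∀ n h, Measurable fun x => φ n x h) ∧
    (∀ n x, IsProbVec (φ n x)) ∧
    ∀ g : Γ, ∀ᵐ x ∂μ,
      Tendsto (fun n => l1dist (φ n (σ g x)) (lshift (c g x) (φ n x))) atTop (𝓝 0)

/-- A cocycle `c` for an action `σ` of `Γ` on `(X, μ)` is *essentially trivial* if there is a
Borel map `φ : X → F(H)` into finite nonempty subsets of `H` with `φ(gx) = c(g,x)·φ(x)`
for every `g ∈ Γ` and a.e. `x ∈ X`. -/
def EssTrivialCocycle {Γ H X : Type*} [Group H] [MeasurableSpace X]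
    (μ : Measure X) (σ : Γ → X → X) (c : Γ → X → H) : Prop :=
  ∃ φ : X → Finset H,
    (∀ F : Finset H, MeasurableSet {x | φ x = F}) ∧
    (∀ x, (φ x).Nonempty) ∧
    ∀ g : Γ, ∀ᵐ x ∂μ, (φ (σ g x) : Set H) = (fun h => c g x * h) '' (φ x : Set H)

/-! Write `Z = ⋃ᵢ kᵢY` with `(kᵢ)` an enumeration of `N_K(G)`. Each `kᵢY` is `G`-invariant, and
`c|(G × kᵢY)` is amenable: if `φₙ` works on `Y`, then `x ↦ c(k, k⁻¹x)·φₙ(k⁻¹x)` works on `kY`,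
because for `g ∈ G` the element `k⁻¹gk` lies in `G` and the cocycle identity gives
`c(g, ky) c(k, y) = c(k, k⁻¹gk·y) c(k⁻¹gk, y)`. On the union, use at `x` the vectors attached to
the first `kᵢY` containing `x`; this index is Borel and `G`-invariant. -/

open scoped Pointwise

section LeftTranslation

variable {H : Type*} [Group H]

lemma lshift_mul (a b : H) (p : H → ℝ) : lshift (a * b) p = lshift a (lshift b p) := by
  funext k
  simp [lshift, mul_assoc]

lemma IsProbVec.lshift (h : H) {p : H → ℝ} (hp : IsProbVec p) : IsProbVec (lshift h p) :=
  ⟨fun _ => hp.1 _, ((Equiv.mulLeft h⁻¹).tsum_eq p).trans hp.2⟩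

lemma l1dist_lshift (h : H) (p q : H → ℝ) :
    l1dist (lshift h p) (lshift h q) = l1dist p q :=
  (Equiv.mulLeft h⁻¹).tsum_eq fun k => |p k - q k|

lemma l1dist_lshift_lshift_of_mul_eq {a b d e : H} (h : b * d = a * e) (p q : H → ℝ) :
    l1dist (lshift a p) (lshift b (lshift d q)) = l1dist p (lshift e q) := by
  rw [← lshift_mul, h, lshift_mul, l1dist_lshift]

end LeftTranslation

lemma measurable_apply_of_countable {X ι β : Type*} [MeasurableSpace X] [MeasurableSpace β]
    [Countable ι] [MeasurableSpace ι] [MeasurableSingletonClass ι] {F : X → ι → β}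
    (hF : ∀ i, Measurable fun x => F x i) {f : X → ι} (hf : Measurable f) :
    Measurable fun x => F x (f x) :=
  (measurable_from_prod_countable_left (f := fun q : X × ι => F q.1 q.2) hF).comp
    (measurable_id.prodMk hf)

theorem AmenableCocycle.iUnion {Γ H X : Type*} [Group H] [MeasurableSpace X] {μ : Measure X}
    {σ : Γ → X → X} {c : Γ → X → H} {A : ℕ → Set X} (hA : ∀ i, MeasurableSet (A i))
    (hA_inv : ∀ i g, σ g ⁻¹' A i = A i) (h : ∀ i, AmenableCocycle (μ.restrict (A i)) σ c) :
    AmenableCocycle (μ.restrict (⋃ i, A i)) σ c := by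
  classical
  choose φ hφ_meas hφ_prob hφ_tendsto using h
  let first (n : ℕ) (x : X) : Prop := x ∈ A n ∨ x ∉ ⋃ i, A i
  have h_first : ∀ x, ∃ n, first n x := fun x => by
    by_cases hx : x ∈ ⋃ i, A i
    · obtain ⟨i, hi⟩ := Set.mem_iUnion.1 hx
      exact ⟨i, .inl hi⟩
    · exact ⟨0, .inr hx⟩
  have h_first_inv : ∀ g x, Nat.find (h_first (σ g x)) = Nat.find (h_first x) := fun g x =>
    Nat.find_congr' fun {n} => by
      simp only [first, Set.mem_iUnion, ← Set.mem_preimage, hA_inv]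
  refine ⟨fun n x => φ (Nat.find (h_first x)) n x, fun n h => ?_,
    fun n x => hφ_prob _ n x, fun g => ?_⟩
  · exact Measurable.find (p := first) (fun i => hφ_meas i n h)
      (fun i => (hA i).union (MeasurableSet.iUnion hA).compl) h_first
  · have h_ae : ∀ i, ∀ᵐ x ∂μ.restrict (⋃ i, A i), x ∈ A i → Tendsto
        (fun n => l1dist (φ i n (σ g x)) (lshift (c g x) (φ i n x))) atTop (𝓝 0) :=
      fun i => ae_mono Measure.restrict_le_self ((ae_restrict_iff' (hA i)).1 (hφ_tendsto i g))
    filter_upwards [ae_all_iff.2 h_ae, ae_restrict_mem (MeasurableSet.iUnion hA)] with x hx hxA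
    rw [h_first_inv]
    exact hx _ ((Nat.find_spec (h_first x)).resolve_right (not_not.2 hxA))

section Normalizer

variable {K X : Type*} [Group K] [MulAction K X] {G : Subgroup K} {k : K}

lemma preimage_smul_smul_set_of_mem_normalizer {Y : Set X}
    (hY : ∀ g ∈ G, (fun x : X => g • x) ⁻¹' Y = Y) (hk : k ∈ Subgroup.normalizer (G : Set K))
    {g : K} (hg : g ∈ G) : (fun x : X => g • x) ⁻¹' (k • Y) = k • Y := by
  ext x
  simp only [Set.mem_preimage, Set.mem_smul_set_iff_inv_smul_mem]
  rw [show k⁻¹ • g • x = (k⁻¹ * g * k) • k⁻¹ • x by simp [mul_smul]]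
  exact Set.ext_iff.1 (hY _ ((Subgroup.mem_normalizer_iff''.1 hk g).1 hg)) _

variable {H : Type*} [Group H] [Countable H] [MeasurableSpace H] [MeasurableSingletonClass H]
  [MeasurableSpace X] [MeasurableConstSMul K X] {μ : Measure X} [SMulInvariantMeasure K X μ]
  {c : K → X → H}

theorem AmenableCocycle.smul_of_mem_normalizer (hc_meas : ∀ k : K, Measurable (c k))
    (hc_cocycle : ∀ g₁ g₂ : K, ∀ᵐ x ∂μ, c (g₁ * g₂) x = c g₁ (g₂ • x) * c g₂ x)
    {Y : Set X} (hY : MeasurableSet Y) (hk : k ∈ Subgroup.normalizer (G : Set K))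
    (h : AmenableCocycle (μ.restrict Y) (fun (g : G) (x : X) => (g : K) • x)
      (fun (g : G) x => c (g : K) x)) :
    AmenableCocycle (μ.restrict (k • Y)) (fun (g : G) (x : X) => (g : K) • x)
      (fun (g : G) x => c (g : K) x) := by
  obtain ⟨φ, hφ_meas, hφ_prob, hφ_tendsto⟩ := h
  let ψ (n : ℕ) (x : X) : H → ℝ := lshift (c k (k⁻¹ • x)) (φ n (k⁻¹ • x))
  refine ⟨ψ, fun n h => ?_, fun n x => (hφ_prob n _).lshift _, fun g => ?_⟩
  · exact measurable_apply_of_countable (fun a => (hφ_meas n a).comp (measurable_const_smul _))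
      ((measurable_of_countable (· ⁻¹ * h)).comp ((hc_meas k).comp (measurable_const_smul _)))
  · let g' : G := ⟨k⁻¹ * g * k, (Subgroup.mem_normalizer_iff''.1 hk g).1 g.2⟩
    have hgk : (g : K) * k = k * g' := by simp only [g']; group
    have h_on_Y : ∀ᵐ y ∂μ.restrict Y, Tendsto
        (fun n => l1dist (ψ n ((g : K) • k • y)) (lshift (c g (k • y)) (ψ n (k • y))))
        atTop (𝓝 0) := by
      filter_upwards [hφ_tendsto g', ae_restrict_of_ae (hc_cocycle g k),
        ae_restrict_of_ae (hc_cocycle k g')] with y hy hgk_y hkg'_y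
      have hc_eq : c g (k • y) * c k y = c k ((g' : K) • y) * c g' y := by
        rw [← hgk_y, hgk, hkg'_y]
      have hgky : (g : K) • k • y = k • (g' : K) • y := by rw [smul_smul, hgk, mul_smul]
      simpa only [ψ, hgky, inv_smul_smul, l1dist_lshift_lshift_of_mul_eq hc_eq] using hy
    have h_transfer := (measurePreserving_smul k⁻¹ μ).restrict_preimage hY
    rw [Set.preimage_smul_inv] at h_transfer
    filter_upwards [h_transfer.quasiMeasurePreserving.ae h_on_Y] with x hx
    simpa only [smul_inv_smul] using hx

end Normalizer

theorem amenable_extend_to_normalizer_saturation_general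
    {K H X : Type*} [Group K] [Countable K] [Group H] [Countable H]
    [MeasurableSpace H] [MeasurableSingletonClass H]
    [MeasurableSpace X] (μ : Measure X)
    [MulAction K X] (hsmul_meas : ∀ k : K, Measurable fun x : X => k • x)
    [SMulInvariantMeasure K X μ]
    (G : Subgroup K)
    (c : K → X → H) (hc_meas : ∀ k : K, Measurable (c k))
    (hc_cocycle : ∀ g₁ g₂ : K, ∀ᵐ x ∂μ, c (g₁ * g₂) x = c g₁ (g₂ • x) * c g₂ x)
    (Y : Set X) (hY_meas : MeasurableSet Y)
    (hY_inv : ∀ g ∈ G, (fun x : X => g • x) ⁻¹' Y = Y)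
    (h_triv : AmenableCocycle (μ.restrict Y) (fun (g : G) (x : X) => (g : K) • x)
      (fun (g : G) x => c (g : K) x)) :
    AmenableCocycle
      (μ.restrict (⋃ k ∈ Subgroup.normalizer (G : Set K), (fun x : X => k • x) '' Y))
      (fun (g : G) (x : X) => (g : K) • x) (fun (g : G) x => c (g : K) x) := by
  have : MeasurableConstSMul K X := ⟨hsmul_meas⟩
  obtain ⟨e, he⟩ : ∃ e : ℕ → K, (Subgroup.normalizer (G : Set K) : Set K) = Set.range e :=
    (Set.to_countable _).exists_eq_range ⟨1, Subgroup.one_mem _⟩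
  have he_mem : ∀ i, e i ∈ Subgroup.normalizer (G : Set K) := fun i =>
    (he.symm ▸ Set.mem_range_self i : e i ∈ (Subgroup.normalizer (G : Set K) : Set K))
  have hZ : (⋃ k ∈ Subgroup.normalizer (G : Set K), (fun x : X => k • x) '' Y) = ⋃ i, e i • Y :=
    (congrArg (fun S : Set K => ⋃ k ∈ S, k • Y) he).trans Set.biUnion_range
  rw [hZ]
  exact AmenableCocycle.iUnion (fun i => hY_meas.const_smul (e i))
    (fun i g => preimage_smul_smul_set_of_mem_normalizer hY_inv (he_mem i) g.2)
    fun i => h_triv.smul_of_mem_normalizer hc_meas hc_cocycle hY_meas (he_mem i)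

/-- Lemma `normalizer` (3). Let `G < K`, `K ↷ (X,μ)` pmp, `c : K × X → H`
a cocycle and `Y ⊆ X` a `G`-invariant measurable set. If `c|(G × Y)` is amenable,
then so is `c|(G × Z)`, where `Z = ⋃_{k ∈ N_K(G)} kY`. -/
theorem amenable_extend_to_normalizer_saturation
    {K H X : Type*} [Group K] [Countable K] [Group H] [Countable H]
    [MeasurableSpace H] [MeasurableSingletonClass H]
    [MeasurableSpace X] (μ : Measure X) [IsProbabilityMeasure μ]
    [MulAction K X] (hsmul_meas : ∀ k : K, Measurable fun x : X => k • x)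
    [SMulInvariantMeasure K X μ]
    (G : Subgroup K)
    (c : K → X → H) (hc_meas : ∀ k : K, Measurable (c k))
    (hc_cocycle : ∀ g₁ g₂ : K, ∀ᵐ x ∂μ, c (g₁ * g₂) x = c g₁ (g₂ • x) * c g₂ x)
    (Y : Set X) (hY_meas : MeasurableSet Y)
    (hY_inv : ∀ g ∈ G, (fun x : X => g • x) ⁻¹' Y = Y)
    (h_triv : AmenableCocycle (μ.restrict Y) (fun (g : G) (x : X) => (g : K) • x)
      (fun (g : G) x => c (g : K) x)) :
    AmenableCocycle
      (μ.restrict (⋃ k ∈ Subgroup.normalizer (G : Set K), (fun x : X => k • x) '' Y))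
      (fun (g : G) (x : X) => (g : K) • x) (fun (g : G) x => c (g : K) x) :=
  amenable_extend_to_normalizer_saturation_general μ hsmul_meas G c hc_meas hc_cocycle Y hY_meas
    hY_inv h_triv
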